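/- arXiv:math/0611926 — 5 statements merged into one kernel-verified Lean document; each statement's English description precedes it below -/
import Mathlib

section
/- (Core estimate in Derridj's criterion, after partial Fourier transform.) Let Ω ⊆ ℝⁿ be open, φ ∈ C¹(Ω;ℝ), ω a bounded open set with closure contained in Ω, ω̃ ⊆ ω measurable with ω∖ω̃ Lebesgue-null, M ≥ 1, C₁, C₂, C₃ > 0, and γ : ω̃ × [0,1] → Ω a measurable map such that: γ(t,0) = t and γ(t,1) ∉ ω for all t ∈ ω̃; for each t ∈ ω̃ the map τ ↦ γ(t,τ) is Lipschitz with |∂_τγ(t,τ)| ≤ C₂ at a.e. τ; for each τ ∈ [0,1] the map t ↦ γ(t,τ) is injective and differentiable on ω̃ with |det D_tγ(t,τ)| ≥ 1/C₁; and φ(γ(t,τ)) − φ(t) ≥ τ^M/C₃ for all (t,τ) ∈ ω̃ × [0,1]. Then for every ξ > 0 and every C¹ function v : ℝⁿ → ℂ with compact support contained in ω, setting g_j := ∂_j v − ξ(∂_jφ)v on Ω (j = 1,…,n), one has ∫_ω |v(t)|² dt ≤ C₁ C₂² (∫₀¹ e^{−ξτ^M/C₃} dτ)² ∫_Ω Σ_{j=1}^n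 |g_j(t)|² dt. -/
/-!
Fix `t ∈ ω'` and put `w(x) = e^{ξ(φ(t) - φ(x))} v(x)`. Along `τ ↦ γ(t,τ)` it runs from
`w(t) = v(t)` to `w(γ(t,1)) = 0`, and its `τ`-derivative is `e^{ξ(φ(t) - φ(γ))} ⟨g(γ), ∂_τγ⟩`,
where `g = (g_j)` is the twisted gradient. The escape condition bounds the exponential by
`e^{-ξτ^M/C₃}`, so `|v(t)| ≤ C₂ ∫₀¹ e^{-ξτ^M/C₃} |g(γ(t,τ))| dτ`. Cauchy–Schwarz for the weight
`e^{-ξτ^M/C₃}`, integration over `t` and the change of variables `t ↦ γ(t,τ)`, whose Jacobian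
is at least `1/C₁`, turn the square of this into the estimate.
-/

open MeasureTheory Real Set

noncomputable section

/-- Partial Fourier transform in the last variable `x`. -/
def fourierE (n : ℕ) (u : EuclideanSpace ℝ (Fin n) × ℝ → ℂ)
    (t : EuclideanSpace ℝ (Fin n)) (ξ : ℝ) : ℂ :=
  ∫ x : ℝ, Complex.exp (-(Complex.I * x * ξ)) * u (t, x)

/-- `L_j u = ∂_{t_j} u + i (∂_{t_j} φ) ∂_x u`. -/
def LopE (n : ℕ) (φ : EuclideanSpace ℝ (Fin n) → ℝ) (j : Fin n)
    (u : EuclideanSpace ℝ (Fin n) × ℝ → ℂ) (p : EuclideanSpace ℝ (Fin n) × ℝ) : ℂ :=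
  fderiv ℝ u p (EuclideanSpace.single j 1, (0 : ℝ))
    + Complex.I * (fderiv ℝ φ p.1 (EuclideanSpace.single j 1) : ℝ)
      * fderiv ℝ u p ((0 : EuclideanSpace ℝ (Fin n)), (1 : ℝ))

/-- Jacobian determinant of a map `ℝⁿ → ℝⁿ` at a point. -/
def jacDet (n : ℕ) (F : EuclideanSpace ℝ (Fin n) → EuclideanSpace ℝ (Fin n))
    (t : EuclideanSpace ℝ (Fin n)) : ℝ :=
  (Matrix.of fun i j => fderiv ℝ F t (EuclideanSpace.single j 1) i).det

open scoped ENNReal NNReal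

theorem ContinuousLinearMap.norm_apply_le_norm_mul_sqrt_sum_sq {ι F : Type*} [Fintype ι]
    [DecidableEq ι] [NormedAddCommGroup F] [NormedSpace ℝ F] (L : EuclideanSpace ℝ ι →L[ℝ] F)
    (u : EuclideanSpace ℝ ι) :
    ‖L u‖ ≤ ‖u‖ * √(∑ j, ‖L (EuclideanSpace.single j 1)‖ ^ 2) := by
  have hu : u = ∑ j, u j • EuclideanSpace.single j (1 : ℝ) := by
    ext i; simp [Pi.single_apply]
  calc ‖L u‖ = ‖∑ j, u j • L (EuclideanSpace.single j 1)‖ := by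
        conv_lhs => rw [hu]
        simp only [map_sum, map_smul]
    _ ≤ ∑ j, ‖u j‖ * ‖L (EuclideanSpace.single j 1)‖ :=
        (norm_sum_le _ _).trans_eq (by simp only [norm_smul])
    _ ≤ √(∑ j, ‖u j‖ ^ 2) * √(∑ j, ‖L (EuclideanSpace.single j 1)‖ ^ 2) :=
        Real.sum_mul_le_sqrt_mul_sqrt _ _ _
    _ = ‖u‖ * √(∑ j, ‖L (EuclideanSpace.single j 1)‖ ^ 2) := by rw [EuclideanSpace.norm_eq]

theorem ContDiffOn.exists_lipschitzOnWith_comp {X E F : Type*} [PseudoMetricSpace X]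
    [NormedAddCommGroup E] [NormedSpace ℝ E] [NormedAddCommGroup F] [NormedSpace ℝ F]
    {H : E → F} {U : Set E} (hH : ContDiffOn ℝ 1 H U) (hU : IsOpen U) {c : X → E} {s : Set X}
    (hs : IsCompact s) {K : ℝ≥0} (hc : LipschitzOnWith K c s) (hcU : MapsTo c s U) :
    ∃ L, LipschitzOnWith L (H ∘ c) s := by
  have hloc : LocallyLipschitzOn (c '' s) H := by
    rintro _ ⟨x, hx, rfl⟩
    obtain ⟨L, t, ht, hL⟩ := (hH.contDiffAt (hU.mem_nhds (hcU hx))).exists_lipschitzOnWith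
    exact ⟨L, t, nhdsWithin_le_nhds ht, hL⟩
  obtain ⟨L, hL⟩ :=
    hloc.exists_lipschitzOnWith_of_compact (hs.image_of_continuousOn hc.continuousOn)
  exact ⟨L * K, hL.comp hc (mapsTo_image c s)⟩

theorem enorm_sub_le_lintegral_of_lipschitzOnWith {F : Type*} [NormedAddCommGroup F]
    [NormedSpace ℝ F] {f : ℝ → F} {K : ℝ≥0} {a b : ℝ} (hab : a ≤ b)
    (hf : LipschitzOnWith K f (Icc a b)) {g : ℝ → ℝ≥0∞}
    (hg : ∀ᵐ τ ∂volume.restrict (Ioo a b), ∃ f', HasDerivAt f f' τ ∧ ‖f'‖ₑ ≤ g τ) :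
    ‖f b - f a‖ₑ ≤ ∫⁻ τ in Ioo a b, g τ := by
  -- Test against a norming functional, to use the FTC for real absolutely continuous functions.
  obtain ⟨ℓ, hℓ, hℓx⟩ := exists_dual_vector'' ℝ (f b - f a)
  have hac : AbsolutelyContinuousOnInterval (ℓ ∘ f) a b :=
    (ℓ.lipschitz.comp_lipschitzOnWith
      (hf.mono (uIcc_of_le hab).subset)).absolutelyContinuousOnInterval
  calc ‖f b - f a‖ₑ = ‖∫ τ in a..b, deriv (ℓ ∘ f) τ‖ₑ := by
        rw [hac.integral_deriv_eq_sub]; simp [← map_sub, hℓx]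
    _ ≤ ∫⁻ τ in Ioo a b, ‖deriv (ℓ ∘ f) τ‖ₑ := by
        rw [intervalIntegral.integral_of_le hab, ← restrict_Ioo_eq_restrict_Ioc]
        exact enorm_integral_le_lintegral_enorm _
    _ ≤ ∫⁻ τ in Ioo a b, g τ := by
        refine lintegral_mono_ae ?_
        filter_upwards [hg] with τ ⟨f', hf', hle⟩
        rw [(ℓ.hasFDerivAt.comp_hasDerivAt τ hf').deriv]
        have hℓ₁ : ‖ℓ‖ₑ ≤ 1 := by simpa [enorm, ← NNReal.coe_le_one] using hℓ
        calc ‖ℓ f'‖ₑ ≤ ‖ℓ‖ₑ * ‖f'‖ₑ := ℓ.le_opENorm f'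
          _ ≤ ‖f'‖ₑ := mul_le_of_le_one_left zero_le hℓ₁
          _ ≤ g τ := hle

theorem lintegral_mul_sq_le_lintegral_mul_lintegral {α : Type*} [MeasurableSpace α]
    {μ : Measure α} {ρ σ : α → ℝ≥0∞} (hρ : AEMeasurable ρ μ) (hσ : AEMeasurable σ μ) :
    (∫⁻ a, ρ a * σ a ∂μ) ^ 2 ≤ (∫⁻ a, ρ a ∂μ) * ∫⁻ a, ρ a * σ a ^ 2 ∂μ := by
  have hHolder := ENNReal.lintegral_mul_norm_pow_le hρ (hρ.mul (hσ.pow_const 2))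
    (p := 2⁻¹) (q := 2⁻¹) (by norm_num) (by norm_num) (by norm_num)
  have hsplit : ∀ a, ρ a ^ (2⁻¹ : ℝ) * (ρ a * σ a ^ 2) ^ (2⁻¹ : ℝ) = ρ a * σ a := by
    intro a
    rw [ENNReal.mul_rpow_of_nonneg _ _ (by norm_num), ← mul_assoc,
      ← ENNReal.rpow_add_of_nonneg _ _ (by norm_num) (by norm_num), ← ENNReal.rpow_natCast,
      ← ENNReal.rpow_mul]
    norm_num
  simp only [Pi.mul_apply, hsplit] at hHolder
  calc (∫⁻ a, ρ a * σ a ∂μ) ^ 2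
      ≤ ((∫⁻ a, ρ a ∂μ) ^ (2⁻¹ : ℝ) * (∫⁻ a, ρ a * σ a ^ 2 ∂μ) ^ (2⁻¹ : ℝ)) ^ 2 := by gcongr
    _ = (∫⁻ a, ρ a ∂μ) * ∫⁻ a, ρ a * σ a ^ 2 ∂μ := by
      rw [mul_pow, ← ENNReal.rpow_natCast, ← ENNReal.rpow_natCast, ← ENNReal.rpow_mul,
        ← ENNReal.rpow_mul]
      norm_num

theorem setLIntegral_le_mul_lintegral_mul_of_le_lintegral {α β : Type*} [MeasurableSpace α]
    [MeasurableSpace β] {μ : Measure α} {ν : Measure β} [SFinite μ] [SFinite ν] {s : Set α}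
    (hs : MeasurableSet s) {f : α → ℝ≥0∞} {ρ : β → ℝ≥0∞} {F : α → β → ℝ≥0∞}
    (hρ : Measurable ρ) (hF : Measurable (Function.uncurry F)) {c B : ℝ≥0∞}
    (hf : ∀ t ∈ s, f t ≤ c * ∫⁻ τ, ρ τ * F t τ ∂ν) (hB : ∀ᵐ τ ∂ν, ∫⁻ t in s, F t τ ∂μ ≤ B) :
    ∫⁻ t in s, f t ∂μ ≤ c * (∫⁻ τ, ρ τ ∂ν) * B := by
  have hρF : Measurable fun p : α × β => ρ p.2 * F p.1 p.2 := (hρ.comp measurable_snd).mul hF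
  calc ∫⁻ t in s, f t ∂μ
      ≤ ∫⁻ t in s, c * ∫⁻ τ, ρ τ * F t τ ∂ν ∂μ := setLIntegral_mono' hs hf
    _ = c * ∫⁻ τ, ρ τ * ∫⁻ t in s, F t τ ∂μ ∂ν := by
        rw [lintegral_const_mul _ hρF.lintegral_prod_right', lintegral_lintegral_swap
          hρF.aemeasurable]
        refine congrArg (c * ·) (lintegral_congr fun τ => ?_)
        have hFτ : Measurable fun t => F t τ := hF.comp (measurable_id.prodMk measurable_const)
        dsimp only
        exact lintegral_const_mul _ hFτ
    _ ≤ c * ∫⁻ τ, ρ τ * B ∂ν := by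
        gcongr c * ?_
        exact lintegral_mono_ae (hB.mono fun τ hτ => by gcongr)
    _ = c * (∫⁻ τ, ρ τ ∂ν) * B := by rw [lintegral_mul_const _ hρ, mul_assoc]

theorem ofReal_intervalIntegral_eq_setLIntegral_Ioo {f : ℝ → ℝ} {a b : ℝ} (hab : a ≤ b)
    (hf : IntegrableOn f (Ioo a b)) (hf₀ : ∀ x ∈ Ioo a b, 0 ≤ f x) :
    ENNReal.ofReal (∫ x in a..b, f x) = ∫⁻ x in Ioo a b, ENNReal.ofReal (f x) := by
  rw [intervalIntegral.integral_of_le hab, integral_Ioc_eq_integral_Ioo,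
    ofReal_integral_eq_lintegral_ofReal hf
      ((ae_restrict_iff' measurableSet_Ioo).2 (ae_of_all _ hf₀))]

theorem jacDet_eq_det_fderiv (n : ℕ) (F : EuclideanSpace ℝ (Fin n) → EuclideanSpace ℝ (Fin n))
    (t : EuclideanSpace ℝ (Fin n)) : jacDet n F t = (fderiv ℝ F t).det := by
  rw [ContinuousLinearMap.det,
    ← LinearMap.det_toMatrix (EuclideanSpace.basisFun (Fin n) ℝ).toBasis]
  rfl

theorem setLIntegral_comp_le_of_inv_le_abs_jacDet {n : ℕ}
    {F : EuclideanSpace ℝ (Fin n) → EuclideanSpace ℝ (Fin n)} {s U : Set (EuclideanSpace ℝ (Fin n))}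
    (hs : MeasurableSet s) (hFs : InjOn F s) (hFU : MapsTo F s U) {C : ℝ} (hC : 0 < C)
    (hF : ∀ t ∈ s, DifferentiableAt ℝ F t ∧ 1 / C ≤ |jacDet n F t|)
    (g : EuclideanSpace ℝ (Fin n) → ℝ≥0∞) :
    ∫⁻ t in s, g (F t) ≤ ENNReal.ofReal C * ∫⁻ x in U, g x := by
  have hJ : ∀ t ∈ s, 1 ≤ ENNReal.ofReal C * ENNReal.ofReal |(fderiv ℝ F t).det| := by
    intro t ht
    rw [← ENNReal.ofReal_mul hC.le, ← ENNReal.ofReal_one, ← jacDet_eq_det_fderiv]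
    exact ENNReal.ofReal_le_ofReal ((div_le_iff₀' hC).1 (hF t ht).2)
  calc ∫⁻ t in s, g (F t)
      ≤ ∫⁻ t in s, ENNReal.ofReal C * (ENNReal.ofReal |(fderiv ℝ F t).det| * g (F t)) :=
        setLIntegral_mono' hs fun t ht => by
          rw [← mul_assoc]; exact le_mul_of_one_le_left zero_le (hJ t ht)
    _ = ENNReal.ofReal C * ∫⁻ x in F '' s, g x := by
        rw [lintegral_const_mul' _ _ ENNReal.ofReal_ne_top,
          lintegral_image_eq_lintegral_abs_det_fderiv_mul volume hs
            (fun t ht => (hF t ht).1.hasFDerivAt.hasFDerivWithinAt) hFs]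
    _ ≤ ENNReal.ofReal C * ∫⁻ x in U, g x := by
        gcongr
        exact hFU.image_subset

section Twisted

variable {E : Type*} [NormedAddCommGroup E] [NormedSpace ℝ E]

/-- `e^{ξφ} d(e^{-ξφ} v)`; on the basis vector `EuclideanSpace.single j 1` it is the paper's
`g_j = ∂_j v - ξ (∂_j φ) v`. -/
def twistedFDeriv (ξ : ℝ) (φ : E → ℝ) (v : E → ℂ) (x : E) : E →L[ℝ] ℂ :=
  fderiv ℝ v x - (ξ • fderiv ℝ φ x).smulRight (v x)

theorem twistedFDeriv_apply (ξ : ℝ) (φ : E → ℝ) (v : E → ℂ) (x u : E) :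
    twistedFDeriv ξ φ v x u = fderiv ℝ v x u - ξ * (fderiv ℝ φ x u : ℂ) * v x := by
  simp [twistedFDeriv, Complex.real_smul]

theorem hasFDerivAt_exp_mul_sub_smul {ξ : ℝ} {φ : E → ℝ} {v : E → ℂ} {x : E} (a : ℝ)
    (hφ : DifferentiableAt ℝ φ x) (hv : DifferentiableAt ℝ v x) :
    HasFDerivAt (fun y => Real.exp (ξ * (a - φ y)) • v y)
      (Real.exp (ξ * (a - φ x)) • twistedFDeriv ξ φ v x) x := by
  refine ((((hφ.hasFDerivAt.const_sub a).const_mul ξ).exp).smul hv.hasFDerivAt).congr_fderiv ?_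
  ext u
  simp [twistedFDeriv, Complex.real_smul]
  ring

variable {ι : Type*} [Fintype ι] [DecidableEq ι]

def twistedGradSq (ξ : ℝ) (φ : EuclideanSpace ℝ ι → ℝ) (v : EuclideanSpace ℝ ι → ℂ)
    (x : EuclideanSpace ℝ ι) : ℝ :=
  ∑ j, ‖twistedFDeriv ξ φ v x (EuclideanSpace.single j 1)‖ ^ 2

theorem twistedGradSq_eq_sum (ξ : ℝ) (φ : EuclideanSpace ℝ ι → ℝ) (v : EuclideanSpace ℝ ι → ℂ)
    (x : EuclideanSpace ℝ ι) :
    twistedGradSq ξ φ v x = ∑ j, ‖fderiv ℝ v x (EuclideanSpace.single j 1)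
      - ξ * (fderiv ℝ φ x (EuclideanSpace.single j 1) : ℂ) * v x‖ ^ 2 := by
  simp only [twistedGradSq, twistedFDeriv_apply]

theorem norm_twistedFDeriv_apply_le (ξ : ℝ) (φ : EuclideanSpace ℝ ι → ℝ)
    (v : EuclideanSpace ℝ ι → ℂ) (x u : EuclideanSpace ℝ ι) :
    ‖twistedFDeriv ξ φ v x u‖ ≤ ‖u‖ * √(twistedGradSq ξ φ v x) :=
  (twistedFDeriv ξ φ v x).norm_apply_le_norm_mul_sqrt_sum_sq u

theorem norm_exp_smul_twistedFDeriv_apply_le {ξ : ℝ} (hξ : 0 ≤ ξ)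
    {φ : EuclideanSpace ℝ ι → ℝ} {v : EuclideanSpace ℝ ι → ℂ} {x u : EuclideanSpace ℝ ι}
    {a r C : ℝ} (hr : r ≤ φ x - a) (hu : ‖u‖ ≤ C) :
    ‖(Real.exp (ξ * (a - φ x)) • twistedFDeriv ξ φ v x) u‖ ≤
      C * (exp (-(ξ * r)) * √(twistedGradSq ξ φ v x)) := by
  have hexp : Real.exp (ξ * (a - φ x)) ≤ exp (-(ξ * r)) := by
    gcongr; nlinarith
  rw [smul_apply, norm_smul, Real.norm_of_nonneg (exp_nonneg _), mul_left_comm]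
  gcongr
  exact (norm_twistedFDeriv_apply_le ξ φ v x u).trans (by gcongr)

theorem enorm_le_lintegral_exp_mul_sqrt_twistedGradSq {ξ : ℝ} (hξ : 0 ≤ ξ)
    {φ : EuclideanSpace ℝ ι → ℝ} {v : EuclideanSpace ℝ ι → ℂ} {Ω : Set (EuclideanSpace ℝ ι)}
    (hΩ : IsOpen Ω) (hφ : ContDiffOn ℝ 1 φ Ω) (hv : ContDiffOn ℝ 1 v Ω)
    {c : ℝ → EuclideanSpace ℝ ι} {K : ℝ≥0} {C : ℝ} {e : ℝ → ℝ}
    (hcΩ : MapsTo c (Icc 0 1) Ω) (hc : LipschitzOnWith K c (Icc 0 1))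
    (hc' : ∀ᵐ τ ∂volume.restrict (Icc (0 : ℝ) 1), DifferentiableAt ℝ c τ ∧ ‖deriv c τ‖ ≤ C)
    (hv1 : v (c 1) = 0) (hesc : ∀ τ ∈ Icc (0 : ℝ) 1, e τ ≤ φ (c τ) - φ (c 0)) :
    ‖v (c 0)‖ₑ ≤ ENNReal.ofReal C * ∫⁻ τ in Ioo 0 1,
      ENNReal.ofReal (exp (-(ξ * e τ))) * ENNReal.ofReal √(twistedGradSq ξ φ v (c τ)) := by
  set H : EuclideanSpace ℝ ι → ℂ := fun y => Real.exp (ξ * (φ (c 0) - φ y)) • v y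
  have hH : ContDiffOn ℝ 1 H Ω :=
    (contDiff_exp.comp_contDiffOn ((contDiffOn_const.sub hφ).const_smul ξ)).smul hv
  obtain ⟨L, hL⟩ := hH.exists_lipschitzOnWith_comp hΩ isCompact_Icc hc hcΩ
  have hderiv : ∀ᵐ τ ∂volume.restrict (Ioo (0 : ℝ) 1), ∃ w', HasDerivAt (H ∘ c) w' τ ∧
      ‖w'‖ₑ ≤ ENNReal.ofReal C * (ENNReal.ofReal (exp (-(ξ * e τ))) *
        ENNReal.ofReal √(twistedGradSq ξ φ v (c τ))) := by
    filter_upwards [ae_restrict_of_ae_restrict_of_subset Ioo_subset_Icc_self hc',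
      ae_restrict_mem measurableSet_Ioo] with τ ⟨hcτ, hC⟩ hτ
    have hτ' : τ ∈ Icc (0 : ℝ) 1 := Ioo_subset_Icc_self hτ
    have hΩτ : Ω ∈ nhds (c τ) := hΩ.mem_nhds (hcΩ hτ')
    refine ⟨_, (hasFDerivAt_exp_mul_sub_smul (φ (c 0))
      ((hφ.contDiffAt hΩτ).differentiableAt one_ne_zero)
      ((hv.contDiffAt hΩτ).differentiableAt one_ne_zero)).comp_hasDerivAt τ hcτ.hasDerivAt, ?_⟩
    rw [← ENNReal.ofReal_mul (exp_nonneg _), ← ENNReal.ofReal_mul ((norm_nonneg _).trans hC),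
      ← ofReal_norm]
    exact ENNReal.ofReal_le_ofReal (norm_exp_smul_twistedFDeriv_apply_le hξ (hesc τ hτ') hC)
  have hH0 : H (c 0) = v (c 0) := by simp [H]
  have hH1 : H (c 1) = 0 := by simp [H, hv1]
  calc ‖v (c 0)‖ₑ = ‖(H ∘ c) 1 - (H ∘ c) 0‖ₑ := by simp [hH0, hH1]
    _ ≤ _ := enorm_sub_le_lintegral_of_lipschitzOnWith zero_le_one hL hderiv
    _ = _ := lintegral_const_mul' _ _ ENNReal.ofReal_ne_top

theorem twistedGradSq_nonneg (ξ : ℝ) (φ : EuclideanSpace ℝ ι → ℝ) (v : EuclideanSpace ℝ ι → ℂ)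
    (x : EuclideanSpace ℝ ι) : 0 ≤ twistedGradSq ξ φ v x := by
  unfold twistedGradSq; positivity

theorem measurable_twistedGradSq {ξ : ℝ} {φ : EuclideanSpace ℝ ι → ℝ}
    {v : EuclideanSpace ℝ ι → ℂ} (hv : Measurable v) : Measurable (twistedGradSq ξ φ v) := by
  unfold twistedGradSq
  simp only [twistedFDeriv_apply]
  fun_prop

theorem continuousOn_twistedGradSq {ξ : ℝ} {φ : EuclideanSpace ℝ ι → ℝ}
    {v : EuclideanSpace ℝ ι → ℂ} {Ω : Set (EuclideanSpace ℝ ι)} (hΩ : IsOpen Ω)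
    (hφ : ContDiffOn ℝ 1 φ Ω) (hv : ContDiffOn ℝ 1 v Ω) :
    ContinuousOn (twistedGradSq ξ φ v) Ω := by
  have hdφ := hφ.continuousOn_fderiv_of_isOpen hΩ le_rfl
  have hdv := hv.continuousOn_fderiv_of_isOpen hΩ le_rfl
  refine continuousOn_finsetSum _ fun j _ => ContinuousOn.pow (ContinuousOn.norm ?_) 2
  simp only [twistedFDeriv_apply]
  exact (hdv.clm_apply continuousOn_const).sub ((continuousOn_const.mul
    (Complex.continuous_ofReal.comp_continuousOn (hdφ.clm_apply continuousOn_const))).mul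
      hv.continuousOn)

theorem integrableOn_twistedGradSq {ξ : ℝ} {φ : EuclideanSpace ℝ ι → ℝ}
    {v : EuclideanSpace ℝ ι → ℂ} {Ω : Set (EuclideanSpace ℝ ι)} (hΩ : IsOpen Ω)
    (hφ : ContDiffOn ℝ 1 φ Ω) (hv : ContDiff ℝ 1 v) (hvc : HasCompactSupport v)
    (hvΩ : tsupport v ⊆ Ω) : IntegrableOn (twistedGradSq ξ φ v) Ω := by
  refine ((continuousOn_twistedGradSq hΩ hφ hv.contDiffOn).mono hvΩ).integrableOn_compact hvc
    |>.of_forall_sdiff_eq_zero hΩ.measurableSet fun x hx => ?_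
  simp [twistedGradSq, twistedFDeriv_apply, image_eq_zero_of_notMem_tsupport hx.2,
    fderiv_of_notMem_tsupport ℝ hx.2]

theorem enorm_sq_le_lintegral_exp_mul_twistedGradSq {ξ : ℝ} (hξ : 0 ≤ ξ)
    {φ : EuclideanSpace ℝ ι → ℝ} {v : EuclideanSpace ℝ ι → ℂ} {Ω : Set (EuclideanSpace ℝ ι)}
    (hΩ : IsOpen Ω) (hφ : ContDiffOn ℝ 1 φ Ω) (hv : ContDiffOn ℝ 1 v Ω)
    {c : ℝ → EuclideanSpace ℝ ι} {K : ℝ≥0} {C : ℝ} {e : ℝ → ℝ} (he : Measurable e)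
    (hcΩ : MapsTo c (Icc 0 1) Ω) (hc : LipschitzOnWith K c (Icc 0 1))
    (hc' : ∀ᵐ τ ∂volume.restrict (Icc (0 : ℝ) 1), DifferentiableAt ℝ c τ ∧ ‖deriv c τ‖ ≤ C)
    (hv1 : v (c 1) = 0) (hesc : ∀ τ ∈ Icc (0 : ℝ) 1, e τ ≤ φ (c τ) - φ (c 0)) :
    ‖v (c 0)‖ₑ ^ 2 ≤ ENNReal.ofReal C ^ 2 * (∫⁻ τ in Ioo 0 1, ENNReal.ofReal (exp (-(ξ * e τ)))) *
      ∫⁻ τ in Ioo 0 1,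
        ENNReal.ofReal (exp (-(ξ * e τ))) * ENNReal.ofReal (twistedGradSq ξ φ v (c τ)) := by
  have hρ : AEMeasurable (fun τ => ENNReal.ofReal (exp (-(ξ * e τ))))
      (volume.restrict (Ioo (0 : ℝ) 1)) := by fun_prop
  have hσ : AEMeasurable (fun τ => ENNReal.ofReal √(twistedGradSq ξ φ v (c τ)))
      (volume.restrict (Ioo (0 : ℝ) 1)) :=
    (ENNReal.continuous_ofReal.comp_continuousOn (continuous_sqrt.comp_continuousOn
      ((continuousOn_twistedGradSq hΩ hφ hv).comp hc.continuousOn hcΩ))).mono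
      Ioo_subset_Icc_self |>.aemeasurable measurableSet_Ioo
  have hσ_sq : ∀ τ, ENNReal.ofReal √(twistedGradSq ξ φ v (c τ)) ^ 2 =
      ENNReal.ofReal (twistedGradSq ξ φ v (c τ)) := fun τ => by
    rw [← ENNReal.ofReal_pow (sqrt_nonneg _), sq_sqrt (twistedGradSq_nonneg _ _ _ _)]
  calc ‖v (c 0)‖ₑ ^ 2
      ≤ (ENNReal.ofReal C * ∫⁻ τ in Ioo 0 1, ENNReal.ofReal (exp (-(ξ * e τ))) *
          ENNReal.ofReal √(twistedGradSq ξ φ v (c τ))) ^ 2 := by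
        gcongr
        exact enorm_le_lintegral_exp_mul_sqrt_twistedGradSq hξ hΩ hφ hv hcΩ hc hc' hv1 hesc
    _ ≤ _ := by
      rw [mul_pow, mul_assoc]
      gcongr
      simpa only [hσ_sq] using lintegral_mul_sq_le_lintegral_mul_lintegral hρ hσ

end Twisted

theorem lintegral_enorm_sq_le_of_escape {n : ℕ} {ξ : ℝ} (hξ : 0 ≤ ξ)
    {φ : EuclideanSpace ℝ (Fin n) → ℝ} {v : EuclideanSpace ℝ (Fin n) → ℂ}
    {Ω s : Set (EuclideanSpace ℝ (Fin n))} (hΩ : IsOpen Ω) (hφ : ContDiffOn ℝ 1 φ Ω)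
    (hv : ContDiff ℝ 1 v) (hs : MeasurableSet s) {C₁ C₂ : ℝ} (hC₁ : 0 < C₁) {e : ℝ → ℝ}
    (he : Measurable e) {γ : EuclideanSpace ℝ (Fin n) → ℝ → EuclideanSpace ℝ (Fin n)}
    (hγmeas : Measurable fun p : EuclideanSpace ℝ (Fin n) × ℝ => γ p.1 p.2)
    (hγΩ : ∀ t ∈ s, ∀ τ ∈ Icc (0 : ℝ) 1, γ t τ ∈ Ω) (hγ0 : ∀ t ∈ s, γ t 0 = t)
    (hγ1 : ∀ t ∈ s, v (γ t 1) = 0)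
    (hγLip : ∀ t ∈ s, ∃ K : ℝ≥0, LipschitzOnWith K (γ t) (Icc 0 1))
    (hγτ : ∀ t ∈ s, ∀ᵐ τ ∂volume.restrict (Icc (0 : ℝ) 1),
      DifferentiableAt ℝ (γ t) τ ∧ ‖deriv (γ t) τ‖ ≤ C₂)
    (hγt : ∀ τ ∈ Icc (0 : ℝ) 1, InjOn (fun t => γ t τ) s ∧
      ∀ t ∈ s, DifferentiableAt ℝ (fun t' => γ t' τ) t ∧ 1 / C₁ ≤ |jacDet n (fun t' => γ t' τ) t|)
    (hesc : ∀ t ∈ s, ∀ τ ∈ Icc (0 : ℝ) 1, e τ ≤ φ (γ t τ) - φ t) :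
    ∫⁻ t in s, ‖v t‖ₑ ^ 2 ≤
      ENNReal.ofReal C₂ ^ 2 * (∫⁻ τ in Ioo 0 1, ENNReal.ofReal (exp (-(ξ * e τ)))) *
        (∫⁻ τ in Ioo 0 1, ENNReal.ofReal (exp (-(ξ * e τ)))) *
          (ENNReal.ofReal C₁ * ∫⁻ x in Ω, ENNReal.ofReal (twistedGradSq ξ φ v x)) := by
  refine setLIntegral_le_mul_lintegral_mul_of_le_lintegral
    (F := fun t τ => ENNReal.ofReal (twistedGradSq ξ φ v (γ t τ))) hs (by fun_prop)
    ((measurable_twistedGradSq hv.continuous.measurable).ennreal_ofReal.comp hγmeas)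
    (fun t ht => ?_) ((ae_restrict_iff' measurableSet_Ioo).2 (ae_of_all _ fun τ hτ => ?_))
  · obtain ⟨K, hK⟩ := hγLip t ht
    simpa only [hγ0 t ht] using enorm_sq_le_lintegral_exp_mul_twistedGradSq hξ hΩ hφ
      hv.contDiffOn he (hγΩ t ht) hK (hγτ t ht) (hγ1 t ht)
      (by simpa only [hγ0 t ht] using hesc t ht)
  · have hτ' : τ ∈ Icc (0 : ℝ) 1 := Ioo_subset_Icc_self hτ
    exact setLIntegral_comp_le_of_inv_le_abs_jacDet hs (hγt τ hτ').1
      (fun t ht => hγΩ t ht τ hτ') hC₁ (hγt τ hτ').2 _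

theorem derridj_core_estimate_general
    (n : ℕ) (Ω : Set (EuclideanSpace ℝ (Fin n))) (hΩ : IsOpen Ω)
    (φ : EuclideanSpace ℝ (Fin n) → ℝ) (hφ : ContDiffOn ℝ 1 φ Ω)
    (M : ℝ) (hM : 1 ≤ M)
    (ω ω' : Set (EuclideanSpace ℝ (Fin n)))
    (C₁ C₂ C₃ : ℝ) (γ : EuclideanSpace ℝ (Fin n) → ℝ → EuclideanSpace ℝ (Fin n))
    (hωΩ : closure ω ⊆ Ω)
    (hω' : ω' ⊆ ω) (hω'meas : MeasurableSet ω') (hω'null : volume (ω \ ω') = 0)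
    (hC₁ : 0 < C₁) (hC₂ : 0 < C₂)
    (hγmeas : Measurable fun p : EuclideanSpace ℝ (Fin n) × ℝ => γ p.1 p.2)
    (hγΩ : ∀ t ∈ ω', ∀ τ ∈ Set.Icc (0 : ℝ) 1, γ t τ ∈ Ω)
    (hγ0 : ∀ t ∈ ω', γ t 0 = t) (hγ1 : ∀ t ∈ ω', γ t 1 ∉ ω)
    (hγLip : ∀ t ∈ ω', ∃ K : NNReal, LipschitzOnWith K (γ t) (Set.Icc 0 1))
    (hγτ : ∀ t ∈ ω', ∀ᵐ τ ∂(volume.restrict (Set.Icc (0 : ℝ) 1)),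
      DifferentiableAt ℝ (γ t) τ ∧ ‖deriv (γ t) τ‖ ≤ C₂)
    (hγt : ∀ τ ∈ Set.Icc (0 : ℝ) 1, Set.InjOn (fun t => γ t τ) ω' ∧
      ∀ t ∈ ω', DifferentiableAt ℝ (fun t' => γ t' τ) t ∧
        1 / C₁ ≤ |jacDet n (fun t' => γ t' τ) t|)
    (hesc : ∀ t ∈ ω', ∀ τ ∈ Set.Icc (0 : ℝ) 1, τ ^ M / C₃ ≤ φ (γ t τ) - φ t) :
    ∀ ξ : ℝ, 0 < ξ → ∀ v : EuclideanSpace ℝ (Fin n) → ℂ,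
      ContDiff ℝ 1 v → HasCompactSupport v → tsupport v ⊆ ω →
      (∫ t in ω, ‖v t‖ ^ 2)
        ≤ C₁ * C₂ ^ 2 * (∫ τ in (0 : ℝ)..1, Real.exp (-(ξ * τ ^ M / C₃))) ^ 2 *
            ∫ t in Ω, ∑ j : Fin n,
              ‖fderiv ℝ v t (EuclideanSpace.single j 1)
                - ξ * (fderiv ℝ φ t (EuclideanSpace.single j 1) : ℝ) * v t‖ ^ 2 := by
  intro ξ hξ v hv hvc hvω
  have hvΩ : tsupport v ⊆ Ω := hvω.trans (subset_closure.trans hωΩ)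
  have hest := lintegral_enorm_sq_le_of_escape hξ.le hΩ hφ hv hω'meas hC₁
    (e := fun τ => τ ^ M / C₃) (by fun_prop) hγmeas hγΩ hγ0
    (fun t ht => image_eq_zero_of_notMem_tsupport fun h => hγ1 t ht (hvω h)) hγLip hγτ hγt hesc
  have hωω' : volume.restrict ω = volume.restrict ω' :=
    Measure.restrict_congr_set (ae_eq_set.2 ⟨hω'null, by simp [sdiff_eq_empty.2 hω']⟩)
  have hlhs : ENNReal.ofReal (∫ t in ω, ‖v t‖ ^ 2) ≤ ∫⁻ t in ω', ‖v t‖ₑ ^ 2 := by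
    rw [hωω', ← enorm_eq_ofReal (integral_nonneg fun t => sq_nonneg _)]
    refine (enorm_integral_le_lintegral_enorm _).trans_eq (lintegral_congr fun t => ?_)
    rw [enorm_pow, enorm_norm]
  have hA : ENNReal.ofReal (∫ τ in (0 : ℝ)..1, exp (-(ξ * τ ^ M / C₃))) =
      ∫⁻ τ in Ioo 0 1, ENNReal.ofReal (exp (-(ξ * (τ ^ M / C₃)))) := by
    have hcont : Continuous fun τ : ℝ => exp (-(ξ * (τ ^ M / C₃))) := by
      have := continuous_rpow_const (zero_le_one.trans hM)
      fun_prop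
    simpa only [mul_div_assoc] using ofReal_intervalIntegral_eq_setLIntegral_Ioo zero_le_one
      (hcont.integrableOn_Icc.mono_set Ioo_subset_Icc_self) fun τ _ => (exp_pos _).le
  have hA₀ : 0 ≤ ∫ τ in (0 : ℝ)..1, exp (-(ξ * τ ^ M / C₃)) :=
    intervalIntegral.integral_nonneg zero_le_one fun _ _ => (exp_pos _).le
  simp only [← twistedGradSq_eq_sum]
  have hW₀ : 0 ≤ ∫ x in Ω, twistedGradSq ξ φ v x :=
    setIntegral_nonneg hΩ.measurableSet fun x _ => twistedGradSq_nonneg ξ φ v x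
  rw [← ENNReal.ofReal_le_ofReal_iff (by positivity)]
  calc _ ≤ _ := hlhs
    _ ≤ _ := hest
    _ = _ := by
      rw [ENNReal.ofReal_mul (by positivity), ENNReal.ofReal_mul (by positivity),
        ENNReal.ofReal_mul hC₁.le, ENNReal.ofReal_pow hC₂.le, ENNReal.ofReal_pow hA₀, hA,
        ofReal_integral_eq_lintegral_ofReal (integrableOn_twistedGradSq hΩ hφ hv hvc hvΩ)
          (ae_of_all _ (twistedGradSq_nonneg ξ φ v))]
      ring

/-- core estimate in Derridj's criterion, after partial Fourier
transform. -/
theorem derridj_core_estimate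
    (n : ℕ) (Ω : Set (EuclideanSpace ℝ (Fin n))) (hΩ : IsOpen Ω)
    (φ : EuclideanSpace ℝ (Fin n) → ℝ) (hφ : ContDiffOn ℝ 1 φ Ω)
    (M : ℝ) (hM : 1 ≤ M)
    (ω ω' : Set (EuclideanSpace ℝ (Fin n)))
    (C₁ C₂ C₃ : ℝ) (γ : EuclideanSpace ℝ (Fin n) → ℝ → EuclideanSpace ℝ (Fin n))
    (hωopen : IsOpen ω) (hωbdd : Bornology.IsBounded ω) (hωΩ : closure ω ⊆ Ω)
    (hω' : ω' ⊆ ω) (hω'meas : MeasurableSet ω') (hω'null : volume (ω \ ω') = 0)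
    (hC₁ : 0 < C₁) (hC₂ : 0 < C₂) (hC₃ : 0 < C₃)
    (hγmeas : Measurable fun p : EuclideanSpace ℝ (Fin n) × ℝ => γ p.1 p.2)
    (hγΩ : ∀ t ∈ ω', ∀ τ ∈ Set.Icc (0 : ℝ) 1, γ t τ ∈ Ω)
    (hγ0 : ∀ t ∈ ω', γ t 0 = t) (hγ1 : ∀ t ∈ ω', γ t 1 ∉ ω)
    (hγLip : ∀ t ∈ ω', ∃ K : NNReal, LipschitzOnWith K (γ t) (Set.Icc 0 1))
    (hγτ : ∀ t ∈ ω', ∀ᵐ τ ∂(volume.restrict (Set.Icc (0 : ℝ) 1)),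
      DifferentiableAt ℝ (γ t) τ ∧ ‖deriv (γ t) τ‖ ≤ C₂)
    (hγt : ∀ τ ∈ Set.Icc (0 : ℝ) 1, Set.InjOn (fun t => γ t τ) ω' ∧
      ∀ t ∈ ω', DifferentiableAt ℝ (fun t' => γ t' τ) t ∧
        1 / C₁ ≤ |jacDet n (fun t' => γ t' τ) t|)
    (hesc : ∀ t ∈ ω', ∀ τ ∈ Set.Icc (0 : ℝ) 1, τ ^ M / C₃ ≤ φ (γ t τ) - φ t) :
    ∀ ξ : ℝ, 0 < ξ → ∀ v : EuclideanSpace ℝ (Fin n) → ℂ,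
      ContDiff ℝ 1 v → HasCompactSupport v → tsupport v ⊆ ω →
      (∫ t in ω, ‖v t‖ ^ 2)
        ≤ C₁ * C₂ ^ 2 * (∫ τ in (0 : ℝ)..1, Real.exp (-(ξ * τ ^ M / C₃))) ^ 2 *
            ∫ t in Ω, ∑ j : Fin n,
              ‖fderiv ℝ v t (EuclideanSpace.single j 1)
                - ξ * (fderiv ℝ φ t (EuclideanSpace.single j 1) : ℝ) * v t‖ ^ 2 :=
  derridj_core_estimate_general n Ω hΩ φ hφ M hM ω ω' C₁ C₂ C₃ γ hωΩ hω' hω'meas hω'null hC₁ hC₂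
    hγmeas hγΩ hγ0 hγ1 hγLip hγτ hγt hesc

end
end

section
/- (Quasielliptic case.) Let ℓ ≥ 1 and m ≥ 2ℓ, and let φ ∈ C¹(ℝ²;ℝ) be (1,ℓ)-quasihomogeneous of degree m whose restriction φ̃ to the unit disto-circle S satisfies φ̃ ≥ μ on S for some μ > 0. Assume hypothesis (H1): for some C¹ regular 2π-periodic parametrization P of S, at least one of the two subsets {ϑ ∈ ℝ/2πℤ : (φ̃∘P)′(ϑ) ≥ 0} and {ϑ ∈ ℝ/2πℤ : (φ̃∘P)′(ϑ) ≤ 0} has finitely many connected components. Then φ satisfies the escape condition (H₊) with exponent m. -/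
open MeasureTheory Real Set

noncomputable section

/-- `f_ℓ(σ) = σ|σ|^{ℓ-1}`. -/
def fl (l : ℝ) (σ : ℝ) : ℝ := σ * |σ| ^ (l - 1)

/-- The disto-scalar product `⟨v|w⟩_ℓ`. -/
def distoDot (l : ℝ) (v w : ℝ × ℝ) : ℝ := fl l v.1 * fl l w.1 + v.2 * w.2

/-- The distorted determinant `Δ_ℓ(v;w)`. -/
def distoDet (l : ℝ) (v w : ℝ × ℝ) : ℝ := fl l v.1 * w.2 - v.2 * fl l w.1

/-- The quasihomogeneous gauge `ρ(t,s)`. -/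
def qgauge (l : ℝ) (p : ℝ × ℝ) : ℝ := (|p.1| ^ (2 * l) + p.2 ^ 2) ^ (1 / (2 * l))

/-- The unit disto-circle `S`. -/
def distoCircle (l : ℝ) : Set (ℝ × ℝ) := {p | |p.1| ^ (2 * l) + p.2 ^ 2 = 1}

/-- The point of the disto-circle with angle parameter `ϑ` (image of the unit-circle
point of angle `ϑ` under the inverse of the dressing map). -/
def Pt (l ϑ : ℝ) : ℝ × ℝ := (fl (1 / l) (Real.cos ϑ), Real.sin ϑ)

/-- Euclidean distance in `ℝ²`. -/
def euclDist (v w : ℝ × ℝ) : ℝ := Real.sqrt ((v.1 - w.1) ^ 2 + (v.2 - w.2) ^ 2)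

/-- `φ` is `(1,ℓ)`-quasihomogeneous of degree `m`. -/
def Quasihom (l m : ℝ) (φ : ℝ × ℝ → ℝ) : Prop :=
  ∀ t s lam : ℝ, 0 < lam → φ (lam * t, lam ^ l * s) = lam ^ m * φ (t, s)

/-- Partial Fourier transform in the last variable `x`. -/
def fourierX (u : (ℝ × ℝ) × ℝ → ℂ) (ts : ℝ × ℝ) (ξ : ℝ) : ℂ :=
  ∫ x : ℝ, Complex.exp (-(Complex.I * x * ξ)) * u (ts, x)

/-- `L₁ u = ∂_t u + i (∂_t φ) ∂_x u`. -/
def Lop1 (φ : ℝ × ℝ → ℝ) (u : (ℝ × ℝ) × ℝ → ℂ) (p : (ℝ × ℝ) × ℝ) : ℂ :=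
  fderiv ℝ u p (((1 : ℝ), (0 : ℝ)), (0 : ℝ))
    + Complex.I * (fderiv ℝ φ p.1 ((1 : ℝ), (0 : ℝ)) : ℝ) * fderiv ℝ u p ((0 : ℝ × ℝ), (1 : ℝ))

/-- `L₂ u = ∂_s u + i (∂_s φ) ∂_x u`. -/
def Lop2 (φ : ℝ × ℝ → ℝ) (u : (ℝ × ℝ) × ℝ → ℂ) (p : (ℝ × ℝ) × ℝ) : ℂ :=
  fderiv ℝ u p (((0 : ℝ), (1 : ℝ)), (0 : ℝ))
    + Complex.I * (fderiv ℝ φ p.1 ((0 : ℝ), (1 : ℝ)) : ℝ) * fderiv ℝ u p ((0 : ℝ × ℝ), (1 : ℝ))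

/-- The system `(L₁,L₂)` attached to `φ` is microlocally `σ`-subelliptic in `{ξ > 0}`. -/
def MicrolocSubelliptic (φ : ℝ × ℝ → ℝ) (σ : ℝ) : Prop :=
  ∃ ω : Set (ℝ × ℝ), IsOpen ω ∧ ((0 : ℝ), (0 : ℝ)) ∈ ω ∧ Bornology.IsBounded ω ∧
    ∃ C > (0 : ℝ), ∀ u : (ℝ × ℝ) × ℝ → ℂ, ContDiff ℝ (⊤ : ℕ∞) u → HasCompactSupport u →
      (∀ p : (ℝ × ℝ) × ℝ, p.1 ∉ ω → u p = 0) →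
      (∫ q in ω ×ˢ Set.Ioi (0 : ℝ), q.2 ^ (2 * σ) * ‖fourierX u q.1 q.2‖ ^ 2)
        ≤ C * ∫ q in (Set.univ : Set (ℝ × ℝ)) ×ˢ Set.Ioi (0 : ℝ),
            (‖fourierX (Lop1 φ u) q.1 q.2‖ ^ 2 + ‖fourierX (Lop2 φ u) q.1 q.2‖ ^ 2)

/-- Jacobian determinant of a map `ℝ² → ℝ²` at a point. -/
def jac2 (F : ℝ × ℝ → ℝ × ℝ) (p : ℝ × ℝ) : ℝ :=
  (fderiv ℝ F p (1, 0)).1 * (fderiv ℝ F p (0, 1)).2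
    - (fderiv ℝ F p (1, 0)).2 * (fderiv ℝ F p (0, 1)).1

/-- The escape condition `(H₊)` with exponent `M` for `φ : ℝ² → ℝ`. -/
def EscapeCond (φ : ℝ × ℝ → ℝ) (M : ℝ) : Prop :=
  ∃ (ω ω' : Set (ℝ × ℝ)) (E : Set ((ℝ × ℝ) × ℝ)) (C₁ C₂ C₃ : ℝ)
    (γ : (ℝ × ℝ) → ℝ → ℝ × ℝ),
    IsOpen ω ∧ ((0 : ℝ), (0 : ℝ)) ∈ ω ∧ Bornology.IsBounded ω ∧
    ω' ⊆ ω ∧ MeasurableSet ω' ∧ volume (ω \ ω') = 0 ∧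
    E ⊆ ω' ×ˢ Set.Icc (0 : ℝ) 1 ∧ volume E = 0 ∧
    0 < C₁ ∧ 0 < C₂ ∧ 0 < C₃ ∧
    (∀ t ∈ ω', γ t 0 = t ∧ γ t 1 ∉ ω) ∧
    (∀ t ∈ ω', ∀ τ ∈ Set.Icc (0 : ℝ) 1, (t, τ) ∉ E →
      DifferentiableAt ℝ (γ t) τ ∧ ‖deriv (γ t) τ‖ ≤ C₂ ∧
      DifferentiableAt ℝ (fun t' => γ t' τ) t ∧
      1 / C₁ ≤ |jac2 (fun t' => γ t' τ) t|) ∧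
    (∀ t ∈ ω', ∀ τ ∈ Set.Icc (0 : ℝ) 1, τ ^ M / C₃ ≤ φ (γ t τ) - φ t)


/-- `A ⊆ ℝ` has finitely many connected components. -/
def FinitelyManyComponents (A : Set ℝ) : Prop :=
  Set.Finite ((fun x => connectedComponentIn A x) '' A)

/-- Hypothesis (H1): for some C¹ regular `2π`-periodic parametrization `P` of the
disto-circle, one of the sets `{(φ̃∘P)' ≥ 0}`, `{(φ̃∘P)' ≤ 0}` (within one period) has
finitely many connected components. -/
def HypH1 (l : ℝ) (φ : ℝ × ℝ → ℝ) : Prop :=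
  ∃ P : ℝ → ℝ × ℝ, ContDiff ℝ 1 P ∧ Function.Periodic P (2 * π) ∧
    (∀ ϑ : ℝ, deriv P ϑ ≠ 0) ∧ Set.range P = distoCircle l ∧
    (FinitelyManyComponents {ϑ ∈ Set.Icc 0 (2 * π) | 0 ≤ deriv (fun x => φ (P x)) ϑ} ∨
     FinitelyManyComponents {ϑ ∈ Set.Icc 0 (2 * π) | deriv (fun x => φ (P x)) ϑ ≤ 0})


/-! The escape path is radial for the quasihomogeneous structure. With the dilations
`δ_c(t, s) = (c t, c^ℓ s)` and the gauge `ρ`, put `γ(t, τ) = δ_{1 + τ/ρ(t)} t`, so that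
`ρ(γ(t, τ)) = ρ(t) + τ`. Quasihomogeneity and `φ̃ ≥ μ` give `φ ≥ μ ρ^m`, hence
`φ(γ(t, τ)) - φ(t) = ((1 + τ/ρ)^m - 1) φ(t) ≥ μ ((ρ + τ)^m - ρ^m) ≥ μ τ^m` since `m ≥ 1`.
By Euler's identity for `ρ`, the Jacobian of `t ↦ γ(t, τ)` is `(1 + τ/ρ)^ℓ ≥ 1`, and
`∂_τ γ` is bounded on `{ρ < 1}`. -/

def quasiDilation (l c : ℝ) (p : ℝ × ℝ) : ℝ × ℝ := (c * p.1, c ^ l * p.2)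

lemma Quasihom.apply_quasiDilation {l d : ℝ} {f : ℝ × ℝ → ℝ} (hf : Quasihom l d f)
    {c : ℝ} (hc : 0 < c) (p : ℝ × ℝ) : f (quasiDilation l c p) = c ^ d * f p :=
  hf p.1 p.2 c hc

lemma quasiDilation_quasiDilation (l : ℝ) {a b : ℝ} (ha : 0 ≤ a) (hb : 0 ≤ b) (p : ℝ × ℝ) :
    quasiDilation l a (quasiDilation l b p) = quasiDilation l (a * b) p := by
  simp only [quasiDilation, Real.mul_rpow ha hb, mul_assoc]

lemma hasDerivAt_quasiDilation (l : ℝ) {c : ℝ} (hc : 0 < c) (p : ℝ × ℝ) :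
    HasDerivAt (fun c => quasiDilation l c p) (p.1, l * c ^ (l - 1) * p.2) c := by
  have h := ((hasDerivAt_id c).mul_const p.1).prodMk
    ((Real.hasDerivAt_rpow_const (p := l) (Or.inl hc.ne')).mul_const p.2)
  simpa [quasiDilation] using h

lemma Quasihom.euler_identity {l d : ℝ} {f : ℝ × ℝ → ℝ} (hf : Quasihom l d f) {p : ℝ × ℝ}
    (hdiff : DifferentiableAt ℝ f p) : fderiv ℝ f p (p.1, l * p.2) = d * f p := by
  have hcurve : HasDerivAt (fun c => quasiDilation l c p) (p.1, l * p.2) 1 := by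
    simpa using hasDerivAt_quasiDilation l one_pos p
  have hleft : HasDerivAt (fun c => f (quasiDilation l c p)) (fderiv ℝ f p (p.1, l * p.2)) 1 :=
    hdiff.hasFDerivAt.comp_hasDerivAt_of_eq 1 hcurve (by simp [quasiDilation])
  have hright : HasDerivAt (fun c : ℝ => c ^ d * f p) (d * f p) 1 := by
    simpa using (Real.hasDerivAt_rpow_const (p := d) (Or.inl one_ne_zero)).mul_const (f p)
  refine hleft.unique (hright.congr_of_eventuallyEq ?_)
  filter_upwards [lt_mem_nhds one_pos] with c hc using hf.apply_quasiDilation hc p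

section Gauge

variable {l : ℝ}

lemma qgauge_base_pos {p : ℝ × ℝ} (hp : p ≠ 0) :
    0 < |p.1| ^ (2 * l) + p.2 ^ 2 := by
  rcases eq_or_ne p.1 0 with h1 | h1
  · have h2 : p.2 ≠ 0 := fun h2 => hp (Prod.ext h1 h2)
    positivity
  · have := Real.rpow_pos_of_pos (abs_pos.2 h1) (2 * l)
    positivity

lemma qgauge_nonneg (l : ℝ) (p : ℝ × ℝ) : 0 ≤ qgauge l p := by
  unfold qgauge; positivity

lemma qgauge_pos {p : ℝ × ℝ} (hp : p ≠ 0) : 0 < qgauge l p :=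
  Real.rpow_pos_of_pos (qgauge_base_pos hp) _

lemma qgauge_zero (hl : 0 < l) : qgauge l 0 = 0 := by
  simp [qgauge, Real.zero_rpow (by positivity : 2 * l ≠ 0),
    Real.zero_rpow (by positivity : l⁻¹ * 2⁻¹ ≠ 0)]

lemma qgauge_rpow_two_mul (hl : 0 < l) (p : ℝ × ℝ) :
    qgauge l p ^ (2 * l) = |p.1| ^ (2 * l) + p.2 ^ 2 := by
  rw [qgauge, ← Real.rpow_mul (by positivity), one_div_mul_cancel (by positivity),
    Real.rpow_one]

lemma mem_distoCircle_of_qgauge_eq_one (hl : 0 < l) {p : ℝ × ℝ} (hp : qgauge l p = 1) :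
    p ∈ distoCircle l := by
  show |p.1| ^ (2 * l) + p.2 ^ 2 = 1
  rw [← qgauge_rpow_two_mul hl, hp, Real.one_rpow]

lemma qgauge_quasihom (hl : 0 < l) : Quasihom l 1 (qgauge l) := by
  intro t s c hc
  have h1 : |c * t| ^ (2 * l) = c ^ (2 * l) * |t| ^ (2 * l) := by
    rw [abs_mul, Real.mul_rpow (abs_nonneg _) (abs_nonneg _), abs_of_pos hc]
  have h2 : (c ^ l * s) ^ 2 = c ^ (2 * l) * s ^ 2 := by
    rw [mul_pow, ← Real.rpow_natCast, ← Real.rpow_mul hc.le, mul_comm l]; norm_num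
  rw [qgauge, qgauge, h1, h2, ← mul_add, Real.mul_rpow (by positivity) (by positivity),
    ← Real.rpow_mul hc.le, mul_one_div_cancel (by positivity), Real.rpow_one]

lemma continuous_qgauge (hl : 0 < l) : Continuous (qgauge l) :=
  ((continuous_abs.comp continuous_fst).rpow_const (fun _ => Or.inr (by positivity))
    |>.add (continuous_snd.pow 2)).rpow_const (fun _ => Or.inr (by positivity))

lemma differentiableAt_qgauge (hl : 1 < 2 * l) {p : ℝ × ℝ} (hp : p ≠ 0) :
    DifferentiableAt ℝ (qgauge l) p := by
  have hbase : DifferentiableAt ℝ (fun q : ℝ × ℝ => |q.1| ^ (2 * l) + q.2 ^ 2) p :=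
    ((hasDerivAt_abs_rpow p.1 hl).differentiableAt.comp p differentiableAt_fst).add
      (differentiableAt_snd.pow 2)
  exact hbase.rpow_const (Or.inl (qgauge_base_pos hp).ne')

lemma abs_fst_le_qgauge (hl : 0 < l) (p : ℝ × ℝ) : |p.1| ≤ qgauge l p :=
  calc |p.1| = (|p.1| ^ (2 * l)) ^ (1 / (2 * l)) := by
        rw [← Real.rpow_mul (abs_nonneg _), mul_one_div_cancel (by positivity), Real.rpow_one]
    _ ≤ qgauge l p :=
        Real.rpow_le_rpow (by positivity) (le_add_of_nonneg_right (sq_nonneg _)) (by positivity)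

lemma abs_snd_le_qgauge_rpow (hl : 0 < l) (p : ℝ × ℝ) : |p.2| ≤ qgauge l p ^ l := by
  refine abs_le_of_sq_le_sq ?_ (by positivity [qgauge_nonneg l p])
  rw [← Real.rpow_mul_natCast (qgauge_nonneg l p), Nat.cast_ofNat, mul_comm,
    qgauge_rpow_two_mul hl]
  exact le_add_of_nonneg_left (by positivity)

end Gauge

lemma Quasihom.mul_qgauge_rpow_le {l m μ : ℝ} {φ : ℝ × ℝ → ℝ} (hl : 0 < l)
    (hqh : Quasihom l m φ) (hpos : ∀ θ ∈ distoCircle l, μ ≤ φ θ) {p : ℝ × ℝ} (hp : p ≠ 0) :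
    μ * qgauge l p ^ m ≤ φ p := by
  set r := qgauge l p
  have hr : 0 < r := qgauge_pos hp
  set θ := quasiDilation l r⁻¹ p
  have hθ : qgauge l θ = 1 := by
    rw [(qgauge_quasihom hl).apply_quasiDilation (inv_pos.2 hr), Real.rpow_one,
      inv_mul_cancel₀ hr.ne']
  have hpθ : quasiDilation l r θ = p := by
    rw [quasiDilation_quasiDilation l hr.le (inv_pos.2 hr).le, mul_inv_cancel₀ hr.ne']
    simp [quasiDilation]
  calc μ * r ^ m ≤ φ θ * r ^ m :=
        mul_le_mul_of_nonneg_right (hpos θ (mem_distoCircle_of_qgauge_eq_one hl hθ))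
          (by positivity)
    _ = φ (quasiDilation l r θ) := by rw [hqh.apply_quasiDilation hr, mul_comm]
    _ = φ p := by rw [hpθ]

section DilationField

variable {l : ℝ} {Λ : ℝ × ℝ → ℝ} {Λ' : ℝ × ℝ →L[ℝ] ℝ} {t : ℝ × ℝ}

lemma HasFDerivAt.quasiDilation (hΛ : HasFDerivAt Λ Λ' t) (hpos : 0 < Λ t) :
    HasFDerivAt (fun p => quasiDilation l (Λ p) p)
      ((Λ t • ContinuousLinearMap.fst ℝ ℝ ℝ + t.1 • Λ').prod
        (Λ t ^ l • ContinuousLinearMap.snd ℝ ℝ ℝ + t.2 • (l * Λ t ^ (l - 1)) • Λ')) t :=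
  (hΛ.mul hasFDerivAt_fst).prodMk
    (((Real.hasDerivAt_rpow_const (Or.inl hpos.ne')).comp_hasFDerivAt t hΛ).mul hasFDerivAt_snd)

lemma jac2_quasiDilation (hΛ : HasFDerivAt Λ Λ' t) (hpos : 0 < Λ t) :
    jac2 (fun p => quasiDilation l (Λ p) p) t = Λ t ^ l * (Λ t + Λ' (t.1, l * t.2)) := by
  have hpow : Λ t ^ (l - 1) * Λ t = Λ t ^ l := by
    rw [← Real.rpow_add_one hpos.ne', sub_add_cancel]
  have hlin : Λ' (t.1, l * t.2) = t.1 * Λ' (1, 0) + l * t.2 * Λ' (0, 1) := by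
    rw [show ((t.1, l * t.2) : ℝ × ℝ) = t.1 • (1, 0) + (l * t.2) • (0, 1) by
      ext <;> simp, map_add, map_smul, map_smul, smul_eq_mul, smul_eq_mul]
  rw [jac2, (hΛ.quasiDilation hpos).fderiv, hlin]
  simp only [ContinuousLinearMap.prod_apply, add_apply,
    smul_apply, ContinuousLinearMap.coe_fst', ContinuousLinearMap.coe_snd',
    smul_eq_mul]
  linear_combination l * t.2 * Λ' (0, 1) * hpow

end DilationField

def escapeMap (l : ℝ) (t : ℝ × ℝ) (τ : ℝ) : ℝ × ℝ := quasiDilation l (1 + τ / qgauge l t) t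

section EscapeMap

variable {l τ : ℝ} {t : ℝ × ℝ}

lemma escapeMap_zero (l : ℝ) (t : ℝ × ℝ) : escapeMap l t 0 = t := by
  simp [escapeMap, quasiDilation]

lemma qgauge_escapeMap (hl : 0 < l) (ht : t ≠ 0) (hτ : 0 ≤ τ) :
    qgauge l (escapeMap l t τ) = qgauge l t + τ := by
  have hr := qgauge_pos (l := l) ht
  rw [escapeMap, (qgauge_quasihom hl).apply_quasiDilation (by positivity), Real.rpow_one]
  field_simp

/-- The Jacobian is `(1 + τ/ρ)^ℓ` because, by Euler's identity for the gauge `ρ`, the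
radial derivative of `1 + τ/ρ` exactly cancels the term `τ/ρ`. -/
lemma jac2_escapeMap (hl : 1 < 2 * l) (ht : t ≠ 0) (hτ : 0 ≤ τ) :
    DifferentiableAt ℝ (fun p => escapeMap l p τ) t ∧
      jac2 (fun p => escapeMap l p τ) t = (1 + τ / qgauge l t) ^ l := by
  have hr := qgauge_pos (l := l) ht
  have hρ := differentiableAt_qgauge hl ht
  have hΛ : HasFDerivAt (fun p => 1 + τ / qgauge l p)
      ((-(τ / qgauge l t ^ 2)) • fderiv ℝ (qgauge l) t) t := by
    have h : HasDerivAt (fun x => 1 + τ / x) (-(τ / qgauge l t ^ 2)) (qgauge l t) := by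
      simpa [div_eq_mul_inv] using ((hasDerivAt_inv hr.ne').const_mul τ).const_add 1
    exact h.comp_hasFDerivAt t hρ.hasFDerivAt
  have hpos : 0 < 1 + τ / qgauge l t := by positivity
  have heuler := (qgauge_quasihom (by linarith)).euler_identity hρ
  refine ⟨(hΛ.quasiDilation hpos).differentiableAt, ?_⟩
  change jac2 (fun p => quasiDilation l (1 + τ / qgauge l p) p) t = _
  rw [jac2_quasiDilation hΛ hpos, smul_apply, heuler, smul_eq_mul]
  field_simp
  ring

lemma hasDerivAt_escapeMap (ht : t ≠ 0) (hτ : 0 ≤ τ) :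
    HasDerivAt (escapeMap l t)
      ((qgauge l t)⁻¹ • (t.1, l * (1 + τ / qgauge l t) ^ (l - 1) * t.2)) τ := by
  have hr := qgauge_pos (l := l) ht
  have hΛ : HasDerivAt (fun τ => 1 + τ / qgauge l t) (qgauge l t)⁻¹ τ := by
    simpa [div_eq_mul_inv] using ((hasDerivAt_id τ).mul_const (qgauge l t)⁻¹).const_add 1
  exact (hasDerivAt_quasiDilation l (by positivity) t).scomp τ hΛ

lemma norm_deriv_escapeMap_le (hl : 1 ≤ l) (ht : t ≠ 0) (ht1 : qgauge l t ≤ 1)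
    (hτ : τ ∈ Icc (0 : ℝ) 1) : ‖deriv (escapeMap l t) τ‖ ≤ l * 2 ^ (l - 1) := by
  have hr : 0 < qgauge l t := qgauge_pos ht
  rw [(hasDerivAt_escapeMap ht hτ.1).deriv, norm_smul, norm_inv, Real.norm_of_nonneg hr.le,
    inv_mul_le_iff₀ hr, norm_prod_le_iff, Real.norm_eq_abs, Real.norm_eq_abs]
  set r := qgauge l t
  have hΛ : 0 < 1 + τ / r := by have := hτ.1; positivity
  have hC : 1 ≤ l * 2 ^ (l - 1) :=
    one_le_mul_of_one_le_of_one_le hl (Real.one_le_rpow one_le_two (by linarith : 0 ≤ l - 1))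
  have hrl : r ^ l = r ^ (l - 1) * r := by rw [← Real.rpow_add_one hr.ne', sub_add_cancel]
  have hΛr : (1 + τ / r) * r = r + τ := by field_simp
  constructor
  · exact (abs_fst_le_qgauge (by linarith) t).trans (le_mul_of_one_le_right hr.le hC)
  · rw [abs_mul, abs_of_nonneg (by positivity)]
    calc l * (1 + τ / r) ^ (l - 1) * |t.2| ≤ l * (1 + τ / r) ^ (l - 1) * r ^ l :=
          mul_le_mul_of_nonneg_left (abs_snd_le_qgauge_rpow (by linarith) t) (by positivity)
      _ = l * (r + τ) ^ (l - 1) * r := by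
          rw [← hΛr, Real.mul_rpow hΛ.le hr.le, hrl]; ring
      _ ≤ l * 2 ^ (l - 1) * r := by
          gcongr
          · linarith [hτ.1]
          · linarith [hτ.2]
      _ = r * (l * 2 ^ (l - 1)) := mul_comm _ _

lemma Quasihom.mul_rpow_le_sub_escapeMap {m μ : ℝ} {φ : ℝ × ℝ → ℝ} (hl : 0 < l) (hm : 1 ≤ m)
    (hqh : Quasihom l m φ) (hμ : 0 ≤ μ) (hpos : ∀ θ ∈ distoCircle l, μ ≤ φ θ) (ht : t ≠ 0)
    (hτ : 0 ≤ τ) : μ * τ ^ m ≤ φ (escapeMap l t τ) - φ t := by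
  set r := qgauge l t
  have hr : 0 < r := qgauge_pos ht
  have hΛ : 1 ≤ 1 + τ / r := le_add_of_nonneg_right (by positivity)
  calc μ * τ ^ m ≤ μ * ((r + τ) ^ m - r ^ m) :=
        mul_le_mul_of_nonneg_left (by linarith [Real.add_rpow_le_rpow_add hr.le hτ hm]) hμ
    _ = ((1 + τ / r) ^ m - 1) * (μ * r ^ m) := by
        rw [show r + τ = (1 + τ / r) * r by field_simp, Real.mul_rpow (by positivity) hr.le]
        ring
    _ ≤ ((1 + τ / r) ^ m - 1) * φ t :=
        mul_le_mul_of_nonneg_left (hqh.mul_qgauge_rpow_le hl hpos ht)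
          (sub_nonneg.2 (Real.one_le_rpow hΛ (by linarith)))
    _ = φ (escapeMap l t τ) - φ t := by
        rw [escapeMap, hqh.apply_quasiDilation (by positivity)]
        ring

end EscapeMap

lemma isBounded_setOf_qgauge_le {l : ℝ} (hl : 0 < l) (r : ℝ) :
    Bornology.IsBounded {p : ℝ × ℝ | qgauge l p ≤ r} := by
  refine (Metric.isBounded_closedBall (x := 0) (r := max r (r ^ l))).subset fun p hp => ?_
  have hρ : qgauge l p ≤ r := hp
  rw [Metric.mem_closedBall, dist_zero_right, norm_prod_le_iff]
  exact ⟨le_max_of_le_left ((abs_fst_le_qgauge hl p).trans hρ),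
    le_max_of_le_right ((abs_snd_le_qgauge_rpow hl p).trans
      (Real.rpow_le_rpow (qgauge_nonneg l p) hρ hl.le))⟩

theorem quasielliptic_escape_general
    (l m : ℝ) (hl : 1 ≤ l) (hm : 2 * l ≤ m)
    (φ : ℝ × ℝ → ℝ) (hqh : Quasihom l m φ)
    (μ : ℝ) (hμ : 0 < μ) (hpos : ∀ θ ∈ distoCircle l, μ ≤ φ θ) :
    EscapeCond φ m := by
  have hl0 : 0 < l := by linarith
  set ω : Set (ℝ × ℝ) := {p | qgauge l p < 1}
  have hω : IsOpen ω := isOpen_lt (continuous_qgauge hl0) continuous_const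
  have hω0 : qgauge l 0 < 1 := by rw [qgauge_zero hl0]; exact one_pos
  refine ⟨ω, ω \ {0}, ∅, 1, l * 2 ^ (l - 1), μ⁻¹, escapeMap l, hω, hω0,
    (isBounded_setOf_qgauge_le hl0 1).subset fun p (hp : qgauge l p < 1) => hp.le,
    sdiff_subset, hω.measurableSet.diff (measurableSet_singleton 0),
    by rw [sdiff_sdiff_right_self]; exact measure_mono_null inter_subset_right (measure_singleton 0),
    empty_subset _, measure_empty, one_pos, by positivity, inv_pos.2 hμ, ?_, ?_, ?_⟩
  · rintro t ⟨-, ht0 : t ≠ 0⟩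
    refine ⟨escapeMap_zero l t, ?_⟩
    show ¬ qgauge l (escapeMap l t 1) < 1
    rw [qgauge_escapeMap hl0 ht0 zero_le_one, not_lt]
    linarith [qgauge_nonneg l t]
  · rintro t ⟨htω, ht0 : t ≠ 0⟩ τ hτ -
    obtain ⟨hdiff, hjac⟩ := jac2_escapeMap (by linarith : 1 < 2 * l) ht0 hτ.1
    refine ⟨(hasDerivAt_escapeMap ht0 hτ.1).differentiableAt,
      norm_deriv_escapeMap_le hl ht0 (le_of_lt htω) hτ, hdiff, ?_⟩
    have hΛ : 1 ≤ 1 + τ / qgauge l t :=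
      le_add_of_nonneg_right (div_nonneg hτ.1 (qgauge_nonneg l t))
    rw [hjac, div_one, abs_of_pos (by positivity)]
    exact Real.one_le_rpow hΛ hl0.le
  · rintro t ⟨-, ht0 : t ≠ 0⟩ τ hτ
    rw [div_inv_eq_mul, mul_comm]
    exact hqh.mul_rpow_le_sub_escapeMap hl0 (by linarith) hμ.le hpos ht0 hτ.1

/-- quasielliptic case: if `φ̃ ≥ μ > 0` on `S` and (H1) holds, then `φ`
satisfies the escape condition `(H₊)` with exponent `m`. -/
theorem quasielliptic_escape
    (l m : ℝ) (hl : 1 ≤ l) (hm : 2 * l ≤ m)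
    (φ : ℝ × ℝ → ℝ) (hφ : ContDiff ℝ 1 φ) (hqh : Quasihom l m φ)
    (μ : ℝ) (hμ : 0 < μ) (hpos : ∀ θ ∈ distoCircle l, μ ≤ φ θ)
    (hH1 : HypH1 l φ) :
    EscapeCond φ m :=
  quasielliptic_escape_general l m hl hm φ hqh μ hμ hpos
end
end

section
/- (Jacobian of a two-segment broken disto-line.) Let ℓ ≥ 1, fix τ ∈ ℝ, and let (a₁,b₁), (c,d), (ĉ,d̂) ∈ ℝ² with a₁ ≠ 0, c ≠ 0, ĉ ≠ 0 and Δ_ℓ((c,d);(a₁,b₁)) ≠ 0. For (t,s) ∈ ℝ² define t₁ := f_{1/ℓ}( f_ℓ(a₁) Δ_ℓ((c,d);(t,s)) / Δ_ℓ((c,d);(a₁,b₁)) ), τ₁ := (t − t₁)/c, s₁ := s + (d/f_ℓ(c))(f_ℓ(t₁) − f_ℓ(t)), t₂ := t₁ + ĉ(τ − τ₁), s₂ := s₁ + (d̂/f_ℓ(ĉ))(f_ℓ(t₂) − f_ℓ(t₁)). Then at every point (t,s) with Δ_ℓ((c,d);(t,s)) ≠ 0, the map (t,s) ↦ (t₂,s₂)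 is differentiable and its Jacobian determinant equals the constant δ := −|ĉ|^{1−ℓ} |c|^{ℓ−1} · Δ_ℓ((ĉ,d̂);(a₁,b₁)) / Δ_ℓ((c,d);(a₁,b₁)). -/
open MeasureTheory Real Set

noncomputable section

/-- First coordinate of the disto-line through `(t,s)` parallel to `(c,d)` with speed `ϱ`. -/
def lineT (ϱ t : ℝ) (τ : ℝ) : ℝ := t + ϱ * τ

/-- Second coordinate of the disto-line through `(t,s)` parallel to `(c,d)` with speed `ϱ`. -/
def lineS (l c d ϱ t s : ℝ) (τ : ℝ) : ℝ := s + d / fl l c * (fl l (t + ϱ * τ) - fl l t)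


/-- Position at total time `τ` along a two-segment broken disto-line: first segment through
`(t,s)` parallel to `(c,d)` (with `t`-speed `−c`) up to the disto-ray through `(a₁,b₁)`,
then a segment parallel to `(ĉ,d̂)`. -/
def brokenMap2 (l τ a₁ b₁ c d chat dhat : ℝ) (p : ℝ × ℝ) : ℝ × ℝ :=
  let t₁ := fl (1 / l) (fl l a₁ * distoDet l (c, d) p / distoDet l (c, d) (a₁, b₁))
  let τ₁ := (p.1 - t₁) / c
  let s₁ := p.2 + d / fl l c * (fl l t₁ - fl l p.1)
  let t₂ := t₁ + chat * (τ - τ₁)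
  (t₂, s₁ + dhat / fl l chat * (fl l t₂ - fl l t₁))

/-! With `Δ = Δ_ℓ((c,d);(t,s))` and `D = Δ_ℓ((c,d);(a₁,b₁))`, the crossing point satisfies
`f_ℓ(t₁) = f_ℓ(a₁) Δ / D` and `s₁ = b₁ Δ / D`. Hence `t₂ = ψ(Δ) - (ĉ/c) t + ĉτ` for some `ψ`
that is differentiable away from `0`, and `s₂ = (Δ̂ / (D f_ℓ(ĉ))) Δ + (d̂ / f_ℓ(ĉ)) f_ℓ(t₂)` with
`Δ̂ = Δ_ℓ((ĉ,d̂);(a₁,b₁))`. The term `f_ℓ(t₂)` is a shear and `dψ(Δ)` is parallel to `dΔ`, so the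
Jacobian is `(Δ̂ / (D f_ℓ(ĉ))) · (-ĉ/c) · ∂Δ/∂s`, and `∂Δ/∂s = f_ℓ(c)`. -/

lemma fl_ne_zero (l : ℝ) {x : ℝ} (hx : x ≠ 0) : fl l x ≠ 0 :=
  mul_ne_zero hx (rpow_pos_of_pos (abs_pos.2 hx) _).ne'

lemma fl_fl_one_div (l : ℝ) (hl : l ≠ 0) (u : ℝ) : fl l (fl (1 / l) u) = u := by
  rcases eq_or_ne u 0 with rfl | hu
  · simp [fl]
  have hu' : 0 < |u| := abs_pos.2 hu
  have habs : |fl (1 / l) u| = |u| ^ (1 / l) := by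
    rw [fl, abs_mul, abs_of_nonneg (rpow_nonneg (abs_nonneg u) _), ← rpow_one_add' hu'.le]
    · ring_nf
    · ring_nf; positivity
  rw [fl, habs, ← rpow_mul (abs_nonneg u), fl, mul_assoc, ← rpow_add hu',
    show 1 / l - 1 + 1 / l * (l - 1) = 0 by field_simp; ring, rpow_zero, mul_one]

lemma differentiableAt_fl_of_ne_zero (l : ℝ) {x : ℝ} (hx : x ≠ 0) :
    DifferentiableAt ℝ (fl l) x :=
  differentiableAt_id.mul <| (differentiableAt_abs hx).rpow_const (.inl (abs_ne_zero.2 hx))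

lemma hasDerivAt_fl_zero {l : ℝ} (hl : 1 < l) : HasDerivAt (fl l) 0 0 := by
  rw [hasDerivAt_iff_isLittleO_nhds_zero]
  have hpow : Filter.Tendsto (fun h : ℝ => |h| ^ (l - 1)) (nhds 0) (nhds 0) := by
    simpa [zero_rpow (by linarith : l - 1 ≠ 0)] using
      (continuous_abs.tendsto (0 : ℝ)).rpow_const (.inr (by linarith : (0 : ℝ) ≤ l - 1))
  simpa [fl] using (Asymptotics.isBigO_refl (fun h : ℝ => h) _).mul_isLittleO
    (Asymptotics.isLittleO_one_iff ℝ |>.2 hpow)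

lemma differentiable_fl {l : ℝ} (hl : 1 ≤ l) : Differentiable ℝ (fl l) := by
  intro x
  rcases eq_or_ne x 0 with rfl | hx
  · rcases hl.eq_or_lt with rfl | hl
    · rw [show fl 1 = id from funext fun σ => by simp [fl]]
      exact differentiableAt_id
    · exact (hasDerivAt_fl_zero hl).differentiableAt
  · exact differentiableAt_fl_of_ne_zero l hx

section Jacobian

variable {f g : ℝ × ℝ → ℝ} {p : ℝ × ℝ}

lemma jac2_prodMk {α β : ℝ × ℝ →L[ℝ] ℝ} (hf : HasFDerivAt f α p) (hg : HasFDerivAt g β p) :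
    jac2 (fun q => (f q, g q)) p = α (1, 0) * β (0, 1) - β (1, 0) * α (0, 1) := by
  simp [jac2, (hf.prodMk hg).fderiv]

lemma jac2_shear {h : ℝ → ℝ} (hf : DifferentiableAt ℝ f p) (hg : DifferentiableAt ℝ g p)
    (hh : DifferentiableAt ℝ h (f p)) (A : ℝ) :
    jac2 (fun q => (f q, A * g q + h (f q))) p = A * jac2 (fun q => (f q, g q)) p := by
  have hg' : HasFDerivAt (fun q => A * g q + h (f q)) _ p :=
    (hg.hasFDerivAt.const_mul A).add (hh.hasDerivAt.comp_hasFDerivAt p hf.hasFDerivAt)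
  rw [jac2_prodMk hf.hasFDerivAt hg', jac2_prodMk hf.hasFDerivAt hg.hasFDerivAt]
  simp only [add_apply, smul_apply, smul_eq_mul]
  ring

lemma jac2_comp_sub_mul_fst {φ : ℝ → ℝ} (hg : DifferentiableAt ℝ g p)
    (hφ : DifferentiableAt ℝ φ (g p)) (k e : ℝ) :
    jac2 (fun q => (φ (g q) - k * q.1 + e, g q)) p = -k * fderiv ℝ g p (0, 1) := by
  have hf : HasFDerivAt (fun q => φ (g q) - k * q.1 + e) _ p :=
    ((hφ.hasDerivAt.comp_hasFDerivAt p hg.hasFDerivAt).sub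
      (hasFDerivAt_fst.const_mul k)).add_const e
  rw [jac2_prodMk hf hg.hasFDerivAt]
  simp only [sub_apply, smul_apply, smul_eq_mul, ContinuousLinearMap.coe_fst']
  ring

end Jacobian

lemma hasFDerivAt_distoDet {l : ℝ} (hl : 1 ≤ l) (v p : ℝ × ℝ) :
    HasFDerivAt (distoDet l v) (fl l v.1 • ContinuousLinearMap.snd ℝ ℝ ℝ
      - v.2 • deriv (fl l) p.1 • ContinuousLinearMap.fst ℝ ℝ ℝ) p :=
  (hasFDerivAt_snd.const_mul _).sub
    (((differentiable_fl hl _).hasDerivAt.comp_hasFDerivAt p hasFDerivAt_fst).const_mul _)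

lemma brokenMap2_eq {l τ a₁ b₁ c d chat dhat : ℝ} (hl : l ≠ 0) (hc : c ≠ 0) (hchat : chat ≠ 0)
    (hΔ : distoDet l (c, d) (a₁, b₁) ≠ 0) :
    brokenMap2 l τ a₁ b₁ c d chat dhat = fun q =>
      let t₂ := (1 + chat / c) * fl (1 / l) (fl l a₁ * distoDet l (c, d) q /
        distoDet l (c, d) (a₁, b₁)) - chat / c * q.1 + chat * τ
      (t₂, distoDet l (chat, dhat) (a₁, b₁) / (distoDet l (c, d) (a₁, b₁) * fl l chat) *
          distoDet l (c, d) q + dhat / fl l chat * fl l t₂) := by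
  have hflc := fl_ne_zero l hc
  have hflchat := fl_ne_zero l hchat
  funext q
  simp only [brokenMap2, fl_fl_one_div l hl]
  generalize fl (1 / l) _ = t₁
  have ht₂ : t₁ + chat * (τ - (q.1 - t₁) / c)
      = (1 + chat / c) * t₁ - chat / c * q.1 + chat * τ := by
    field_simp
    ring
  rw [ht₂]
  generalize fl l (_ - _ + _) = flt₂
  simp only [distoDet] at hΔ ⊢
  ext
  · rfl
  · field_simp
    ring

/-- Jacobian of a two-segment broken disto-line. -/
theorem jacobian_brokenMap2 (l : ℝ) (hl : 1 ≤ l) (τ : ℝ) (a₁ b₁ c d chat dhat : ℝ)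
    (ha : a₁ ≠ 0) (hc : c ≠ 0) (hchat : chat ≠ 0)
    (hΔ : distoDet l (c, d) (a₁, b₁) ≠ 0) :
    ∀ t s : ℝ, distoDet l (c, d) (t, s) ≠ 0 →
      DifferentiableAt ℝ (brokenMap2 l τ a₁ b₁ c d chat dhat) (t, s) ∧
      jac2 (brokenMap2 l τ a₁ b₁ c d chat dhat) (t, s)
        = -(|chat| ^ (1 - l) * |c| ^ (l - 1) *
            (distoDet l (chat, dhat) (a₁, b₁) / distoDet l (c, d) (a₁, b₁))) := by
  intro t s hts
  rw [brokenMap2_eq (by linarith) hc hchat hΔ]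
  set D := distoDet l (c, d) (a₁, b₁)
  have hΔd : DifferentiableAt ℝ (distoDet l (c, d)) (t, s) :=
    (hasFDerivAt_distoDet hl _ _).differentiableAt
  have hψ : DifferentiableAt ℝ (fun v => (1 + chat / c) * fl (1 / l) (fl l a₁ * v / D))
      (distoDet l (c, d) (t, s)) := by
    have := differentiableAt_fl_of_ne_zero (1 / l)
      (div_ne_zero (mul_ne_zero (fl_ne_zero l ha) hts) hΔ)
    fun_prop
  have ht₂ : DifferentiableAt ℝ (fun q => (1 + chat / c) *
      fl (1 / l) (fl l a₁ * distoDet l (c, d) q / D) - chat / c * q.1 + chat * τ) (t, s) :=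
    ((hψ.comp (t, s) hΔd).sub (by fun_prop)).add_const _
  refine ⟨?_, ?_⟩
  · have := differentiable_fl hl
    fun_prop
  rw [jac2_shear ht₂ hΔd ((differentiable_fl hl _).const_mul _), jac2_comp_sub_mul_fst hΔd hψ,
    (hasFDerivAt_distoDet hl _ _).fderiv]
  have hc' : |c| ^ (l - 1) ≠ 0 := (rpow_pos_of_pos (abs_pos.2 hc) _).ne'
  have hchat' : |chat| ^ (l - 1) ≠ 0 := (rpow_pos_of_pos (abs_pos.2 hchat) _).ne'
  simp only [sub_apply, smul_apply, ContinuousLinearMap.coe_snd', ContinuousLinearMap.coe_fst',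
    smul_eq_mul, mul_zero, sub_zero, mul_one]
  rw [fl, fl, show 1 - l = -(l - 1) by ring, rpow_neg (abs_nonneg _)]
  field_simp

end
end

section
/- Let ℓ ≥ 1. For every τ ≥ 0 and every γ ∈ ℝ, f_ℓ(τ + γ) − f_ℓ(γ) ≥ f_ℓ(τ/2) = (τ/2)^ℓ. -/
open MeasureTheory Real Set

noncomputable section

lemma fl_eq_rpow (l : ℝ) (hl : 1 ≤ l) {x : ℝ} (hx : 0 ≤ x) : fl l x = x ^ l := by
  unfold fl
  rw [abs_of_nonneg hx]
  rcases eq_or_lt_of_le hx with h | h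
  · rw [← h, Real.zero_rpow (by linarith : l ≠ 0), zero_mul]
  · nth_rewrite 1 [← Real.rpow_one x]
    rw [← Real.rpow_add h]
    norm_num

lemma rpow_superadd {x y p : ℝ} (hx : 0 ≤ x) (hy : 0 ≤ y) (hp : 1 ≤ p) :
    x ^ p + y ^ p ≤ (x + y) ^ p := by
  have := NNReal.add_rpow_le_rpow_add (⟨x, hx⟩ : NNReal) ⟨y, hy⟩ hp
  exact_mod_cast this

lemma fl_neg (l x : ℝ) : fl l (-x) = - fl l x := by
  unfold fl; rw [abs_neg]; ring

theorem fl_shift_lower_bound (l : ℝ) (hl : 1 ≤ l) (τ γ : ℝ) (hτ : 0 ≤ τ) :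
    fl l (τ / 2) ≤ fl l (τ + γ) - fl l γ ∧ fl l (τ / 2) = (τ / 2) ^ l := by
  have hl0 : (0:ℝ) ≤ l := by linarith
  have hτ2 : (0:ℝ) ≤ τ / 2 := by linarith
  have h2 : fl l (τ / 2) = (τ / 2) ^ l := fl_eq_rpow l hl hτ2
  refine ⟨?_, h2⟩
  rw [h2]
  have hτl : (τ / 2) ^ l ≤ τ ^ l := Real.rpow_le_rpow hτ2 (by linarith) hl0
  rcases le_or_gt 0 γ with hγ | hγ
  · have hsup : γ ^ l + τ ^ l ≤ (γ + τ) ^ l :=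
      rpow_superadd hγ hτ hl
    rw [fl_eq_rpow l hl (by linarith : (0:ℝ) ≤ τ + γ), fl_eq_rpow l hl hγ]
    have : γ + τ = τ + γ := by ring
    rw [this] at hsup
    linarith
  · rcases le_or_gt 0 (τ + γ) with hτγ | hτγ
    · have h1 : fl l (τ + γ) = (τ + γ) ^ l := fl_eq_rpow l hl hτγ
      have h3 : fl l γ = -((-γ) ^ l) := by
        rw [← neg_neg γ, fl_neg, fl_eq_rpow l hl (by linarith : (0:ℝ) ≤ -γ), neg_neg]
      rw [h1, h3]
      have hng : (0:ℝ) ≤ -γ := by linarith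
      rcases le_or_gt (τ / 2) (τ + γ) with hc | hc
      · have := Real.rpow_le_rpow hτ2 hc hl0
        have := Real.rpow_nonneg hng l
        linarith
      · have hc2 : τ / 2 ≤ -γ := by linarith
        have := Real.rpow_le_rpow hτ2 hc2 hl0
        have := Real.rpow_nonneg hτγ l
        linarith
    · have h1 : fl l (τ + γ) = -((-(τ + γ)) ^ l) := by
        rw [← neg_neg (τ + γ), fl_neg,
          fl_eq_rpow l hl (by linarith : (0:ℝ) ≤ -(τ + γ)), neg_neg]
      have h3 : fl l γ = -((-γ) ^ l) := by
        rw [← neg_neg γ, fl_neg, fl_eq_rpow l hl (by linarith : (0:ℝ) ≤ -γ), neg_neg]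
      have hsup : (-(τ + γ)) ^ l + τ ^ l ≤ (-γ) ^ l := by
        have := rpow_superadd (x := -(τ + γ)) (y := τ)
          (by linarith) hτ hl
        have he : -(τ + γ) + τ = -γ := by ring
        rwa [he] at this
      rw [h1, h3]
      linarith


end
end

section
/- (Derivative of the first projected coordinate.) Let ℓ ≥ 1, let (c,d) ∈ ℝ² with c ≠ 0, take speed ϱ = c, and let (t,s) ∈ ℝ². Along the disto-line t(τ) = t + cτ, s(τ) = s + (d/f_ℓ(c))(f_ℓ(t(τ)) − f_ℓ(t)), set ρ(τ) := ρ(t(τ),s(τ)) and t̃(τ) := t(τ)/ρ(τ). Then at every τ₀ with ρ(τ₀) > 0, t̃ is differentiable at τ₀ and t̃′(τ₀) = |c|^{1−ℓ} · (s(τ₀)/ρ(τ₀)^{2ℓ+1}) · Δ_ℓ((c,d);(t,s)). -/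
open MeasureTheory Real Set

noncomputable section

/-! The quotient rule for `u / ρ(u, v)` collapses because `ρ^{2ℓ} = |u|^{2ℓ} + v²`: the
`|u|^{2ℓ}` contributions cancel and the derivative is `v (u' v - u v' / ℓ) / ρ^{2ℓ+1}`.
Along a disto-line of speed `ϱ` one has `u' v - u v' / ℓ = (ϱ / f_ℓ(c)) Δ_ℓ((c,d);(u,v))`,
and the distorted determinant is constant along the line; for `ϱ = c` the factor
`c / f_ℓ(c)` is `|c|^{1-ℓ}`. -/

lemma fl_ne_zero_s17 {l c : ℝ} (hc : c ≠ 0) : fl l c ≠ 0 :=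
  mul_ne_zero hc (rpow_pos_of_pos (abs_pos.mpr hc) _).ne'

lemma div_fl_self {l c : ℝ} (hc : c ≠ 0) : c / fl l c = |c| ^ (1 - l) := by
  rw [fl, div_mul_cancel_left₀ hc, ← rpow_neg (abs_nonneg c), neg_sub]

lemma hasDerivAt_fl {l : ℝ} (hl : 1 ≤ l) (x : ℝ) : HasDerivAt (fl l) (l * |x| ^ (l - 1)) x := by
  rcases ne_or_eq x 0 with hx | rfl
  · have hax : |x| ≠ 0 := abs_ne_zero.mpr hx
    refine ((hasDerivAt_id x).mul
      ((hasDerivAt_abs hx).rpow_const (p := l - 1) (Or.inl hax))).congr_deriv ?_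
    rw [rpow_sub_one hax (l - 1), id]
    field_simp
    linear_combination (l - 1) * self_mul_sign x
  · have hslope : ∀ y ∈ ({0}ᶜ : Set ℝ), slope (fl l) 0 y = |y| ^ (l - 1) := fun y hy => by
      simp [slope, fl, inv_mul_cancel_left₀ (show y ≠ 0 from hy)]
    -- `0 ^ 0 = 1`, so `ℓ = 1` is a separate case
    have hval : l * |(0 : ℝ)| ^ (l - 1) = |(0 : ℝ)| ^ (l - 1) := by
      rcases hl.eq_or_lt with rfl | hl1
      · simp
      · simp [zero_rpow (sub_pos.mpr hl1).ne']
    rw [hasDerivAt_iff_tendsto_slope, hval]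
    have hcont : ContinuousAt (fun y : ℝ => |y| ^ (l - 1)) 0 :=
      (continuousAt_rpow_const _ _ (Or.inr (sub_nonneg.mpr hl))).comp continuous_abs.continuousAt
    exact (hcont.tendsto.mono_left nhdsWithin_le_nhds).congr'
      (eventually_nhdsWithin_of_forall fun y hy => (hslope y hy).symm)

lemma qgauge_rpow {l : ℝ} (hl : l ≠ 0) (p : ℝ × ℝ) :
    qgauge l p ^ (2 * l) = |p.1| ^ (2 * l) + p.2 ^ 2 := by
  rw [qgauge, one_div]
  exact rpow_inv_rpow (by positivity) (by simpa using hl)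

lemma abs_rpow_sub_two_mul_sq {p : ℝ} (hp : p ≠ 0) (x : ℝ) :
    |x| ^ (p - 2) * x ^ 2 = |x| ^ p := by
  rw [← sq_abs, ← rpow_natCast, ← rpow_add' (abs_nonneg x) (by simpa using hp)]
  norm_num

section Curve

variable {l : ℝ} {u v : ℝ → ℝ} {u' v' τ : ℝ}

lemma hasDerivAt_qgauge_comp (hl : 1 < 2 * l) (hu : HasDerivAt u u' τ) (hv : HasDerivAt v v' τ)
    (hρ : 0 < qgauge l (u τ, v τ)) :
    HasDerivAt (fun τ => qgauge l (u τ, v τ))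
      ((|u τ| ^ (2 * l - 2) * u τ * u' + v τ * v' / l) / qgauge l (u τ, v τ) ^ (2 * l - 1)) τ := by
  have hl0 : l ≠ 0 := by rintro rfl; norm_num at hl
  set ρ := qgauge l (u τ, v τ)
  have hG : HasDerivAt (fun τ => |u τ| ^ (2 * l) + v τ ^ 2)
      (2 * l * |u τ| ^ (2 * l - 2) * u τ * u' + 2 * v τ * v') τ := by
    refine (((hasDerivAt_abs_rpow (u τ) hl).comp τ hu).add (hv.pow 2)).congr_deriv ?_
    push_cast
    ring
  have hG0 : |u τ| ^ (2 * l) + v τ ^ 2 = ρ ^ (2 * l) := (qgauge_rpow hl0 (u τ, v τ)).symm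
  have hR : 0 < ρ ^ (2 * l) := rpow_pos_of_pos hρ _
  refine (hG.rpow_const (p := 1 / (2 * l)) (Or.inl (hG0 ▸ hR.ne'))).congr_deriv ?_
  rw [rpow_sub_one (hG0 ▸ hR.ne')]
  change _ * _ * (ρ / _) = _
  rw [hG0, rpow_sub_one hρ.ne']
  generalize ρ ^ (2 * l) = R at hR ⊢
  field_simp

lemma hasDerivAt_div_qgauge_comp (hl : 1 < 2 * l) (hu : HasDerivAt u u' τ) (hv : HasDerivAt v v' τ)
    (hρ : 0 < qgauge l (u τ, v τ)) :
    HasDerivAt (fun τ => u τ / qgauge l (u τ, v τ))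
      (v τ * (u' * v τ - u τ * v' / l) / qgauge l (u τ, v τ) ^ (2 * l + 1)) τ := by
  have hl0 : l ≠ 0 := by rintro rfl; norm_num at hl
  refine (hu.div (hasDerivAt_qgauge_comp hl hu hv hρ) hρ.ne').congr_deriv ?_
  set ρ := qgauge l (u τ, v τ)
  have hR : ρ ^ (2 * l) = |u τ| ^ (2 * l) + v τ ^ 2 := qgauge_rpow hl0 _
  have hu2 := abs_rpow_sub_two_mul_sq (show 2 * l ≠ 0 by positivity) (u τ)
  have hR0 : ρ ^ (2 * l) ≠ 0 := (rpow_pos_of_pos hρ _).ne'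
  rw [rpow_sub_one hρ.ne', rpow_add_one hρ.ne']
  generalize ρ ^ (2 * l) = R at hR hR0 ⊢
  generalize |u τ| ^ (2 * l - 2) = B at hu2 ⊢
  generalize |u τ| ^ (2 * l) = A at hR hu2
  field_simp
  linear_combination u' * l * hR - u' * l * hu2

end Curve

lemma hasDerivAt_lineT (ϱ t τ : ℝ) : HasDerivAt (lineT ϱ t) ϱ τ :=
  (((hasDerivAt_id' τ).const_mul ϱ).const_add t).congr_deriv (mul_one ϱ)

lemma hasDerivAt_lineS {l : ℝ} (hl : 1 ≤ l) (c d ϱ t s τ : ℝ) :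
    HasDerivAt (lineS l c d ϱ t s) (d / fl l c * (l * |lineT ϱ t τ| ^ (l - 1) * ϱ)) τ :=
  ((((hasDerivAt_fl hl _).comp τ (hasDerivAt_lineT ϱ t τ)).sub_const (fl l t)).const_mul
    (d / fl l c)).const_add s

lemma distoDet_lineT_lineS {l c : ℝ} (hc : fl l c ≠ 0) (d ϱ t s τ : ℝ) :
    distoDet l (c, d) (lineT ϱ t τ, lineS l c d ϱ t s τ) = distoDet l (c, d) (t, s) := by
  simp only [distoDet, lineT, lineS]
  field_simp
  ring

lemma hasDerivAt_lineT_div_qgauge {l : ℝ} (hl : 1 ≤ l) {c : ℝ} (hc : c ≠ 0) (d ϱ t s τ : ℝ)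
    (hρ : 0 < qgauge l (lineT ϱ t τ, lineS l c d ϱ t s τ)) :
    HasDerivAt (fun τ => lineT ϱ t τ / qgauge l (lineT ϱ t τ, lineS l c d ϱ t s τ))
      (ϱ / fl l c *
        (lineS l c d ϱ t s τ / qgauge l (lineT ϱ t τ, lineS l c d ϱ t s τ) ^ (2 * l + 1)) *
        distoDet l (c, d) (t, s)) τ := by
  refine (hasDerivAt_div_qgauge_comp (by linarith) (hasDerivAt_lineT ϱ t τ)
    (hasDerivAt_lineS hl c d ϱ t s τ) hρ).congr_deriv ?_
  rw [← distoDet_lineT_lineS (fl_ne_zero_s17 hc) d ϱ t s τ]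
  have hl0 : l ≠ 0 := by positivity
  simp only [distoDet, fl]
  field_simp

/-- derivative of the first projected coordinate. -/
theorem hasDerivAt_projected_t (l : ℝ) (hl : 1 ≤ l) (c d : ℝ) (hc : c ≠ 0) (t s : ℝ)
    (τ₀ : ℝ) (hρ : 0 < qgauge l (lineT c t τ₀, lineS l c d c t s τ₀)) :
    HasDerivAt (fun τ => lineT c t τ / qgauge l (lineT c t τ, lineS l c d c t s τ))
      (|c| ^ (1 - l) *
        (lineS l c d c t s τ₀ / qgauge l (lineT c t τ₀, lineS l c d c t s τ₀) ^ (2 * l + 1)) *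
        distoDet l (c, d) (t, s)) τ₀ := by
  simpa only [div_fl_self hc] using hasDerivAt_lineT_div_qgauge hl hc d c t s τ₀ hρ

end
end
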